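/- The set of BK-valid formulas is closed under weak replacement: if (φ ↔ ψ) ∧ (∼φ ↔ ∼ψ) is valid, then for any formula context χ(·), χ(φ) ↔ χ(ψ) is valid. -/

import Mathlib

inductive BKForm : Type where
  | atom : ℕ → BKForm
  | bot  : BKForm
  | snot : BKForm → BKForm
  | and  : BKForm → BKForm → BKForm
  | or   : BKForm → BKForm → BKForm
  | imp  : BKForm → BKForm → BKForm
  | box  : BKForm → BKForm
  | dia  : BKForm → BKForm

def BKForm.neg (φ : BKForm) : BKForm := .imp φ .bot

def BKForm.biimp (φ ψ : BKForm) : BKForm := .and (.imp φ ψ) (.imp ψ φ)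

structure OWModel : Type 1 where
  S : Type
  ne : Nonempty S
  R : S → S → Prop
  Vp : ℕ → S → Prop
  Vm : ℕ → S → Prop

mutual
def verify (M : OWModel) : M.S → BKForm → Prop
  | x, .atom p => M.Vp p x
  | _, .bot => False
  | x, .snot φ => falsify M x φ
  | x, .and φ ψ => verify M x φ ∧ verify M x ψ
  | x, .or φ ψ => verify M x φ ∨ verify M x ψ
  | x, .imp φ ψ => verify M x φ → verify M x ψ
  | x, .box φ => ∀ y, M.R x y → verify M y φ
  | x, .dia φ => ∃ y, M.R x y ∧ verify M y φ
def falsify (M : OWModel) : M.S → BKForm → Prop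
  | x, .atom p => M.Vm p x
  | _, .bot => True
  | x, .snot φ => verify M x φ
  | x, .and φ ψ => falsify M x φ ∨ falsify M x ψ
  | x, .or φ ψ => falsify M x φ ∧ falsify M x ψ
  | x, .imp φ ψ => verify M x φ ∧ falsify M x ψ
  | x, .box φ => ∃ y, M.R x y ∧ falsify M y φ
  | x, .dia φ => ∀ y, M.R x y → falsify M y φ
end

def BKvalid (φ : BKForm) : Prop := ∀ (M : OWModel) (x : M.S), verify M x φ

def BKForm.subst : BKForm → ℕ → BKForm → BKForm
  | .atom p, a, θ => if p = a then θ else .atom p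
  | .bot, _, _ => .bot
  | .snot φ, a, θ => .snot (φ.subst a θ)
  | .and φ ψ, a, θ => .and (φ.subst a θ) (ψ.subst a θ)
  | .or φ ψ, a, θ => .or (φ.subst a θ) (ψ.subst a θ)
  | .imp φ ψ, a, θ => .imp (φ.subst a θ) (ψ.subst a θ)
  | .box φ, a, θ => .box (φ.subst a θ)
  | .dia φ, a, θ => .dia (φ.subst a θ)

/-!
The premise says that `φ` and `ψ` have the same verification set and the same falsification set
in every model. Having both sets equal is preserved by every connective (`∼` swaps the two
sets, and each other clause of `verify`/`falsify` sees its subformulas only through these sets),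
so by induction on `χ` the formulas `χ(φ)` and `χ(ψ)` are verified at the same states.
-/

theorem verify_biimp_iff (M : OWModel) (x : M.S) (φ ψ : BKForm) :
    verify M x (BKForm.biimp φ ψ) ↔ (verify M x φ ↔ verify M x ψ) := by
  simp only [BKForm.biimp, verify]
  exact iff_iff_implies_and_implies.symm

/-- `φ` and `ψ` have the same verification set `|·|⁺` and the same falsification set `|·|⁻`
in `M`. -/
def SameExtensions (M : OWModel) (φ ψ : BKForm) : Prop :=
  (∀ x, verify M x φ ↔ verify M x ψ) ∧ (∀ x, falsify M x φ ↔ falsify M x ψ)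

theorem SameExtensions.refl (M : OWModel) (φ : BKForm) : SameExtensions M φ φ :=
  ⟨fun _ => Iff.rfl, fun _ => Iff.rfl⟩

theorem sameExtensions_of_valid {φ ψ : BKForm}
    (h : BKvalid (.and (BKForm.biimp φ ψ) (BKForm.biimp (.snot φ) (.snot ψ)))) (M : OWModel) :
    SameExtensions M φ ψ := by
  refine ⟨fun x => ?_, fun x => ?_⟩
  · exact (verify_biimp_iff M x φ ψ).1 (h M x).1
  · exact (verify_biimp_iff M x (.snot φ) (.snot ψ)).1 (h M x).2

theorem SameExtensions.subst {M : OWModel} {φ ψ : BKForm} (h : SameExtensions M φ ψ)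
    (χ : BKForm) (a : ℕ) : SameExtensions M (χ.subst a φ) (χ.subst a ψ) := by
  induction χ with
  | atom p =>
    by_cases hp : p = a
    · simpa only [BKForm.subst, hp, if_true] using h
    · simpa only [BKForm.subst, hp, if_false] using SameExtensions.refl M (.atom p)
  | bot => exact SameExtensions.refl M .bot
  | snot _ ih => exact ⟨ih.2, ih.1⟩
  | and _ _ ih₁ ih₂ | or _ _ ih₁ ih₂ | imp _ _ ih₁ ih₂ =>
    constructor <;> intro x <;> simp only [BKForm.subst, verify, falsify, ih₁.1, ih₁.2, ih₂.1, ih₂.2]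
  | box _ ih | dia _ ih =>
    constructor <;> intro x <;> simp only [BKForm.subst, verify, falsify, ih.1, ih.2]

theorem stmt8 (φ ψ : BKForm)
    (h : BKvalid (.and (BKForm.biimp φ ψ) (BKForm.biimp (.snot φ) (.snot ψ)))) :
    ∀ (χ : BKForm) (a : ℕ), BKvalid (BKForm.biimp (χ.subst a φ) (χ.subst a ψ)) := by
  intro χ a M x
  exact (verify_biimp_iff M x _ _).2 (((sameExtensions_of_valid h M).subst χ a).1 x)
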